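/- Let ℓ ≥ s ≥ r ≥ 3 be integers. Then there exists an integer N such that for all n ≥ N, the maximum number of copies of K_s^{(r)} in an n-vertex r-graph that contains no member of the family 𝒦_{ℓ+1}^r as a subhypergraph equals N(K_s^{(r)}, T_r(n,ℓ)). -/

import Mathlib

open Finset

/-- A hypergraph (with vertices drawn from `ℕ`) given by its finite set of hyperedges. -/
abbrev HG : Type := Finset (Finset ℕ)

/-- The support (set of non-isolated vertices) of a hypergraph. -/
def hsupp (G : HG) : Finset ℕ := G.sup id

/-- `G` is `r`-uniform: every hyperedge has exactly `r` vertices. -/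
def Uniform (r : ℕ) (G : HG) : Prop := ∀ e ∈ G, e.card = r

/-- The image of a hypergraph under a relabelling of the vertices. -/
def emap (f : ℕ → ℕ) (G : HG) : HG := G.image (Finset.image f)

/-- `K` is an isomorphic copy of `H` (as hypergraphs; isolated vertices are irrelevant). -/
def IsCopy (H K : HG) : Prop :=
  ∃ f : ℕ → ℕ, Set.InjOn f ↑(hsupp H) ∧ emap f H = K

/-- `G` contains a subhypergraph isomorphic to `H`. -/
def Contains (G H : HG) : Prop := ∃ K, K ⊆ G ∧ IsCopy H K

/-- `N(H, G)`: the number of subhypergraphs of `G` isomorphic to `H`. -/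
noncomputable def copyCount (H G : HG) : ℕ :=
  Set.ncard {K : HG | K ⊆ G ∧ IsCopy H K}

/-- The generalized Turán number `ex_r(n, H, F)`: the maximum number of copies of `H`
in an `F`-free `r`-uniform hypergraph on `n` vertices. -/
noncomputable def exCount (r n : ℕ) (H F : HG) : ℕ :=
  sSup { m | ∃ G : HG, Uniform r G ∧ hsupp G ⊆ Finset.range n ∧
    ¬ Contains G F ∧ m = copyCount H G }

/-- The Turán number `ex_r(n, F)`: the maximum number of hyperedges in an `F`-free
`r`-uniform hypergraph on `n` vertices. -/
noncomputable def exTuran (r n : ℕ) (F : HG) : ℕ :=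
  sSup { m | ∃ G : HG, Uniform r G ∧ hsupp G ⊆ Finset.range n ∧
    ¬ Contains G F ∧ m = G.card }

/-- The complete `r`-graph `K_s^{(r)}` on `s` vertices. -/
def completeHG (r s : ℕ) : HG := Finset.powersetCard r (Finset.range s)

/-- The path `P_l` with `l` edges, as a 2-uniform hypergraph. -/
def pathG (l : ℕ) : HG := (Finset.range l).image (fun i => ({i, i+1} : Finset ℕ))

/-- The cycle `C_l` with `l` edges, as a 2-uniform hypergraph. -/
def cycleG (l : ℕ) : HG := (Finset.range l).image (fun i => ({i, (i+1) % l} : Finset ℕ))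

/-- The star `S_l = K_{1,l}` with `l` edges, as a 2-uniform hypergraph. -/
def starG (l : ℕ) : HG := (Finset.range l).image (fun i => ({0, i+1} : Finset ℕ))

/-- The `r`-expansion `F^r` of a graph `F`: insert `r - 2` new distinct vertices into each
edge of `F`, the new vertices being distinct across edges and disjoint from `V(F)`. -/
def expansion (r : ℕ) (F : HG) : HG :=
  F.image (fun e => e.image (fun v => Nat.pair 0 v) ∪
    (Finset.range (r-2)).image (fun j => Nat.pair 1 (Nat.pair (Encodable.encode e) j)))

/-- The vertex-disjoint union of the hypergraphs `H 0, …, H (k-1)`. -/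
def hIUnion (k : ℕ) (H : ℕ → HG) : HG :=
  (Finset.range k).biUnion (fun i => emap (fun v => Nat.pair i v) (H i))

/-- The vertex-disjoint union of two hypergraphs. -/
def hUnion (G H : HG) : HG := emap (fun v => 2*v) G ∪ emap (fun v => 2*v+1) H

/-- The strong chromatic number of a hypergraph (for a 2-uniform hypergraph this is
the usual chromatic number of the graph). -/
noncomputable def chromNum (G : HG) : ℕ :=
  sInf { k | ∃ c : ℕ → Fin k, ∀ e ∈ G, Set.InjOn c ↑e }

/-- The complete balanced `l`-partite `r`-graph `T_r(n, l)` on `n` vertices. -/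
def turanHG (r n l : ℕ) : HG :=
  (Finset.powersetCard r (Finset.range n)).filter
    (fun e => ∀ i ∈ e, ∀ j ∈ e, i % l = j % l → i = j)

/-- `S_{n,t}^r(n-t, l)`: take a set `U` of `t` vertices together with a disjoint copy of
`T_r(n-t, l)`, and add as hyperedges all `r`-sets meeting `U`. -/
def splitTuranHG (r n t l : ℕ) : HG :=
  (Finset.powersetCard r (Finset.range n)).filter
    (fun e => (∃ v ∈ e, v < t) ∨ ∀ i ∈ e, ∀ j ∈ e, (i - t) % l = (j - t) % l → i = j)

/-- `S_{n,t}^r`: the `n`-vertex `r`-graph of all `r`-sets meeting a fixed set of `t` vertices. -/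
def starHG (r n t : ℕ) : HG :=
  (Finset.powersetCard r (Finset.range n)).filter (fun e => ∃ v ∈ e, v < t)

/-- `F` is a member of the family `𝒦_t^r`. -/
def memFamilyK (r t : ℕ) (F : HG) : Prop :=
  Uniform r F ∧ F.card ≤ Nat.choose t 2 ∧
    ∃ S : Finset ℕ, S.card = t ∧ ∀ u ∈ S, ∀ v ∈ S, u ≠ v → ∃ e ∈ F, u ∈ e ∧ v ∈ e

/-- The maximum number of copies of `H` in an `n`-vertex `r`-graph containing no member
of the family described by the predicate `P` as a subhypergraph. -/
noncomputable def exCountFam (r n : ℕ) (H : HG) (P : HG → Prop) : ℕ :=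
  sSup { m | ∃ G : HG, Uniform r G ∧ hsupp G ⊆ Finset.range n ∧
    (∀ F : HG, P F → ¬ Contains G F) ∧ m = copyCount H G }

/-- `G` contains a Berge copy of `F`. -/
def ContainsBerge (G F : HG) : Prop :=
  ∃ f : ℕ → ℕ, Set.InjOn f ↑(hsupp F) ∧
    ∃ φ : {e : Finset ℕ // e ∈ F} → {e : Finset ℕ // e ∈ G},
      Function.Injective φ ∧ ∀ e : {e : Finset ℕ // e ∈ F}, e.1.image f ⊆ (φ e).1

/-- `ex_s(n, Berge-F)`: the maximum number of hyperedges in an `n`-vertex `s`-graph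
containing no Berge copy of `F`. -/
noncomputable def exBerge (s n : ℕ) (F : HG) : ℕ :=
  sSup { m | ∃ G : HG, Uniform s G ∧ hsupp G ⊆ Finset.range n ∧
    ¬ ContainsBerge G F ∧ m = G.card }


/-!
A copy of `K_s^{(r)}` in an `r`-graph `G` spans an `s`-clique of the 2-shadow of `G` (the graph
of pairs covered by a hyperedge), and `G` is `𝒦_{l+1}^r`-free exactly when its 2-shadow is
`K_{l+1}`-free: a clique on `l + 1` vertices, together with one hyperedge covering each of its
pairs, is a member of `𝒦_{l+1}^r`. By Zykov's theorem a `K_{l+1}`-free graph on `n` vertices has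
at most `e_s(n₁, …, n_l)` cliques of size `s`, where `n₁, …, n_l` are the part sizes of the
balanced partition of `n`; this is proved by induction on `l`, splitting the cliques at a vertex
`v` whose neighbourhood contains the most `s`-cliques and smoothing the resulting part sizes. The
bound is attained by `T_r(n, l)`, whose `K_s^{(r)}`-copies are the `s`-sets meeting every part at
most once, and which is `𝒦_{l+1}^r`-free since its shadow is `l`-partite. In particular the
equality holds for every `n`.
-/

namespace Multiset

@[simp] lemma esymm_zero_right {R : Type*} [CommSemiring R] (m : Multiset R) : m.esymm 0 = 1 := by
  simp [esymm]

lemma esymm_cons_succ {R : Type*} [CommSemiring R] (a : R) (m : Multiset R) (k : ℕ) :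
    (a ::ₘ m).esymm (k + 1) = m.esymm (k + 1) + a * m.esymm k := by
  simp [esymm, map_map, sum_map_mul_left]

lemma esymm_cons_cons_le {a b a' b' : ℕ} (m : Multiset ℕ) (k : ℕ)
    (hsum : a + b = a' + b') (hprod : a * b ≤ a' * b') :
    (a ::ₘ b ::ₘ m).esymm k ≤ (a' ::ₘ b' ::ₘ m).esymm k := by
  rcases k with _ | _ | k
  · simp
  · simp only [esymm_cons_succ, esymm_zero_right]
    omega
  · simp only [esymm_cons_succ]
    nlinarith [Nat.mul_le_mul_right (m.esymm k) hprod]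

def balancedParts (n l : ℕ) : Multiset ℕ :=
  replicate (n % l) (n / l + 1) + replicate (l - n % l) (n / l)

def IsBalanced (m : Multiset ℕ) : Prop := ∀ a ∈ m, ∀ b ∈ m, a ≤ b + 1

-- `n % 0 = n`, so for `l = 0` the definition is meaningful only when `n = 0`.
lemma card_balancedParts {n l : ℕ} (h : 0 < l ∨ n = 0) : card (balancedParts n l) = l := by
  rcases h with h | rfl
  · have := Nat.mod_lt n h
    simp [balancedParts]
    omega
  · simp [balancedParts]

lemma sum_balancedParts {n l : ℕ} (h : 0 < l ∨ n = 0) : (balancedParts n l).sum = n := by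
  rcases h with h | rfl
  · have := Nat.div_add_mod n l
    have := Nat.mul_le_mul_right (n / l) (Nat.mod_lt n h).le
    simp only [balancedParts, sum_add, sum_replicate, smul_eq_mul, Nat.sub_mul, Nat.mul_succ]
    omega
  · simp [balancedParts]

lemma replicate_add_replicate_eq_balancedParts {q k l : ℕ} (hk : k ≤ l) :
    replicate k (q + 1) + replicate (l - k) q = balancedParts (l * q + k) l := by
  rcases hk.lt_or_eq with hk | rfl
  · have hmod : (l * q + k) % l = k := by rw [Nat.mul_add_mod, Nat.mod_eq_of_lt hk]
    have hdiv : (l * q + k) / l = q := by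
      rw [Nat.mul_add_div (by omega), Nat.div_eq_of_lt hk, add_zero]
    rw [balancedParts, hmod, hdiv]
  · rcases Nat.eq_zero_or_pos k with rfl | hk
    · simp [balancedParts]
    · rw [balancedParts, ← Nat.mul_succ, Nat.mul_mod_right, Nat.mul_div_cancel_left _ hk]
      simp

lemma IsBalanced.eq_balancedParts {m : Multiset ℕ} (hm : IsBalanced m) :
    m = balancedParts m.sum (card m) := by
  rcases eq_or_ne m 0 with rfl | hne
  · simp [balancedParts]
  obtain ⟨q, hq, hqmin⟩ := exists_min_image id hne
  have hval : ∀ a ∈ m, a ≠ q + 1 → a = q := fun a ha hne' => by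
    have : q ≤ a := hqmin a ha
    have := hm a ha q hq
    omega
  have hsplit : m = replicate (count (q + 1) m) (q + 1) +
      replicate (card m - count (q + 1) m) q := by
    have hfilter := filter_add_not (q + 1 = ·) m
    rw [filter_eq] at hfilter
    have hcard := congrArg card hfilter
    rw [card_add, card_replicate] at hcard
    conv_lhs => rw [← hfilter]
    congr 1
    exact eq_replicate.2 ⟨by omega,
      fun b hb => hval b (mem_filter.1 hb).1 (Ne.symm (mem_filter.1 hb).2)⟩
  have hk := count_le_card (q + 1) m
  generalize count (q + 1) m = k at hsplit hk
  have hsum : m.sum = card m * q + k := by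
    conv_lhs => rw [hsplit]
    have := Nat.mul_le_mul_right q hk
    simp only [sum_add, sum_replicate, smul_eq_mul, Nat.sub_mul, Nat.mul_succ]
    omega
  rw [hsum]
  conv_lhs => rw [hsplit]
  exact replicate_add_replicate_eq_balancedParts hk

-- Replacing two parts `b + 2 + d, b` by `b + 1 + d, b + 1` does not decrease `esymm` and
-- decreases the sum of squares.
theorem esymm_le_esymm_balancedParts (m : Multiset ℕ) (k : ℕ) :
    m.esymm k ≤ (balancedParts m.sum (card m)).esymm k := by
  induction hN : (m.map (· ^ 2)).sum using Nat.strong_induction_on generalizing m with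
  | _ N ih =>
  by_cases hbal : IsBalanced m
  · conv_lhs => rw [hbal.eq_balancedParts]
  obtain ⟨a, ha, b, hb, hab⟩ : ∃ a ∈ m, ∃ b ∈ m, b + 1 < a := by
    simpa [IsBalanced] using hbal
  obtain ⟨rest, rfl⟩ : ∃ rest, m = a ::ₘ b ::ₘ rest :=
    ⟨(m.erase a).erase b, by rw [cons_erase ((mem_erase_of_ne (by omega)).2 hb), cons_erase ha]⟩
  obtain ⟨d, rfl⟩ : ∃ d, a = b + 2 + d := ⟨a - b - 2, by omega⟩
  have hsmaller : (((b + 1 + d) ::ₘ (b + 1) ::ₘ rest).map (· ^ 2)).sum < N := by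
    subst hN
    simp only [map_cons, sum_cons]
    nlinarith
  calc ((b + 2 + d) ::ₘ b ::ₘ rest).esymm k
      ≤ ((b + 1 + d) ::ₘ (b + 1) ::ₘ rest).esymm k :=
        esymm_cons_cons_le rest k (by omega) (by nlinarith)
    _ ≤ _ := ih _ hsmaller _ rfl
    _ = (balancedParts ((b + 2 + d) ::ₘ b ::ₘ rest).sum
          (card ((b + 2 + d) ::ₘ b ::ₘ rest))).esymm k := by
        simp only [sum_cons, card_cons]
        congr 2
        omega

lemma esymm_succ_balancedParts_add_mul_le {b n l : ℕ} (hb : b ≤ n) (hl : 0 < l ∨ b = 0)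
    (k : ℕ) :
    (balancedParts b l).esymm (k + 1) + (n - b) * (balancedParts b l).esymm k ≤
      (balancedParts n (l + 1)).esymm (k + 1) := by
  rw [← esymm_cons_succ]
  convert esymm_le_esymm_balancedParts ((n - b) ::ₘ balancedParts b l) (k + 1) using 3
  · rw [sum_cons, sum_balancedParts hl]
    omega
  · rw [card_cons, card_balancedParts hl]

end Multiset

namespace SimpleGraph

lemma eq_empty_of_cliqueFreeOn_one {α : Type*} {G : SimpleGraph α} {V : Finset α}
    (hV : G.CliqueFreeOn V 1) : V = ∅ :=
  eq_empty_of_forall_notMem fun _ hx =>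
    (G.cliqueFreeOn_singleton.1 (CliqueFreeOn.subset G (Set.singleton_subset_iff.2 hx) hV)).false

variable {α : Type*} [DecidableEq α] (G : SimpleGraph α) [DecidableRel G.Adj]

def cliqueFinsetOn (V : Finset α) (s : ℕ) : Finset (Finset α) :=
  {T ∈ V.powerset | G.IsNClique s T}

variable {G}

@[simp] lemma mem_cliqueFinsetOn {V T : Finset α} {s : ℕ} :
    T ∈ G.cliqueFinsetOn V s ↔ T ⊆ V ∧ G.IsNClique s T := by
  simp [cliqueFinsetOn]

@[simp] lemma cliqueFinsetOn_zero (V : Finset α) : G.cliqueFinsetOn V 0 = {∅} := by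
  ext T
  simp only [mem_cliqueFinsetOn, isNClique_zero, mem_singleton]
  exact ⟨And.right, fun h => ⟨h ▸ empty_subset V, h⟩⟩

lemma cliqueFinsetOn_empty_succ (s : ℕ) : G.cliqueFinsetOn ∅ (s + 1) = ∅ := by
  simp [cliqueFinsetOn, filter_singleton, isNClique_iff]

lemma card_filter_mem_cliqueFinsetOn_le (V : Finset α) (s : ℕ) (w : α) :
    #{T ∈ G.cliqueFinsetOn V (s + 1) | w ∈ T} ≤
      #(G.cliqueFinsetOn {x ∈ V | G.Adj w x} s) := by
  refine card_le_card_of_injOn (·.erase w) (fun T hT => ?_) (fun T₁ hT₁ T₂ hT₂ h => ?_)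
  · simp only [coe_filter, Set.mem_ofPred_eq, mem_cliqueFinsetOn, Finset.mem_coe] at hT ⊢
    obtain ⟨⟨hTV, hT⟩, hwT⟩ := hT
    refine ⟨fun x hx => ?_, hT.erase_of_mem hwT⟩
    obtain ⟨hxw, hxT⟩ := mem_erase.1 hx
    exact Finset.mem_filter.2 ⟨hTV hxT, hT.isClique hwT hxT (Ne.symm hxw)⟩
  · simp only [coe_filter, Set.mem_ofPred_eq] at hT₁ hT₂
    rw [← insert_erase hT₁.2, ← insert_erase hT₂.2]
    exact congrArg (insert w) h

lemma card_cliqueFinsetOn_succ_le (V : Finset α) (s : ℕ) (v : α) :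
    #(G.cliqueFinsetOn V (s + 1)) ≤ #(G.cliqueFinsetOn {x ∈ V | G.Adj v x} (s + 1)) +
      ∑ w ∈ V \ {x ∈ V | G.Adj v x}, #(G.cliqueFinsetOn {x ∈ V | G.Adj w x} s) := by
  set B := {x ∈ V | G.Adj v x}
  have hcover : G.cliqueFinsetOn V (s + 1) ⊆ G.cliqueFinsetOn B (s + 1) ∪
      (V \ B).biUnion fun w => {T ∈ G.cliqueFinsetOn V (s + 1) | w ∈ T} := by
    intro T hT
    by_cases hTB : T ⊆ B
    · exact mem_union_left _ (mem_cliqueFinsetOn.2 ⟨hTB, (mem_cliqueFinsetOn.1 hT).2⟩)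
    · obtain ⟨w, hwT, hwB⟩ := not_subset.1 hTB
      refine mem_union_right _ (mem_biUnion.2 ⟨w, ?_, Finset.mem_filter.2 ⟨hT, hwT⟩⟩)
      exact mem_sdiff.2 ⟨(mem_cliqueFinsetOn.1 hT).1 hwT, hwB⟩
  refine (card_le_card hcover).trans ((card_union_le _ _).trans ?_)
  gcongr
  exact card_biUnion_le.trans (sum_le_sum fun w _ => card_filter_mem_cliqueFinsetOn_le V s w)

theorem card_cliqueFinsetOn_le_esymm_balancedParts {l : ℕ} {V : Finset α}
    (hV : G.CliqueFreeOn V (l + 1)) (s : ℕ) :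
    #(G.cliqueFinsetOn V s) ≤ (Multiset.balancedParts #V l).esymm s := by
  induction l generalizing V s with
  | zero =>
    obtain rfl := eq_empty_of_cliqueFreeOn_one hV
    rcases s with _ | s
    · simp
    · simp [cliqueFinsetOn_empty_succ]
  | succ l ih =>
    rcases s with _ | s
    · simp
    rcases V.eq_empty_or_nonempty with rfl | hVne
    · simp [cliqueFinsetOn_empty_succ]
    obtain ⟨v, hvV, hvmax⟩ :=
      V.exists_max_image (fun w => #(G.cliqueFinsetOn {x ∈ V | G.Adj w x} s)) hVne
    set B := {x ∈ V | G.Adj v x}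
    have hBV : B ⊆ V := filter_subset _ _
    have hB : G.CliqueFreeOn B (l + 1) := by
      convert CliqueFreeOn.of_succ G hV (mem_coe.2 hvV) using 1
      ext x
      simp [B]
    have hB₀ : 0 < l ∨ #B = 0 := by
      rcases l.eq_zero_or_pos with rfl | hl
      · exact Or.inr (card_eq_zero.2 (eq_empty_of_cliqueFreeOn_one hB))
      · exact Or.inl hl
    calc #(G.cliqueFinsetOn V (s + 1))
        ≤ #(G.cliqueFinsetOn B (s + 1)) + #(V \ B) * #(G.cliqueFinsetOn B s) :=
          (card_cliqueFinsetOn_succ_le V s v).trans <| by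
            gcongr
            exact sum_le_card_nsmul _ _ _ fun w hw => hvmax w (mem_sdiff.1 hw).1
      _ ≤ (Multiset.balancedParts #B l).esymm (s + 1) +
            (#V - #B) * (Multiset.balancedParts #B l).esymm s := by
          rw [card_sdiff_of_subset hBV]
          gcongr <;> exact ih hB _
      _ ≤ (Multiset.balancedParts #V (l + 1)).esymm (s + 1) :=
          Multiset.esymm_succ_balancedParts_add_mul_le (card_le_card hBV) hB₀ s

lemma card_cliqueFinsetOn_succ_of_join {V W : Finset α} (hWV : W ⊆ V)
    (hW : ∀ x ∈ W, ∀ y ∈ V, G.Adj x y ↔ y ∉ W) (s : ℕ) :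
    #(G.cliqueFinsetOn V (s + 1)) =
      #(G.cliqueFinsetOn (V \ W) (s + 1)) + #W * #(G.cliqueFinsetOn (V \ W) s) := by
  rw [← card_filter_add_card_filter_not (fun T => T ⊆ V \ W), ← card_product]
  congr 1
  · congr 1
    ext T
    simp only [mem_filter, mem_cliqueFinsetOn]
    exact ⟨fun h => ⟨h.2, h.1.2⟩, fun h => ⟨⟨h.1.trans sdiff_subset, h.2⟩, h.1⟩⟩
  symm
  refine card_bij (fun p _ => insert p.1 p.2) ?_ ?_ ?_
  · rintro ⟨x, T⟩ hp
    simp only [mem_product, mem_cliqueFinsetOn, subset_sdiff] at hp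
    obtain ⟨hx, ⟨hTV, hTW⟩, hT⟩ := hp
    have hxT : x ∉ T := fun h => Finset.disjoint_left.1 hTW h hx
    refine mem_filter.2 ⟨mem_cliqueFinsetOn.2 ⟨insert_subset (hWV hx) hTV, ?_⟩, ?_⟩
    · exact hT.insert fun y hy => (hW x hx y (hTV hy)).2 (Finset.disjoint_left.1 hTW hy)
    · exact fun h => (mem_sdiff.1 (h (mem_insert_self x T))).2 hx
  · rintro ⟨x₁, T₁⟩ hp₁ ⟨x₂, T₂⟩ hp₂ h
    simp only [mem_product, mem_cliqueFinsetOn, subset_sdiff] at hp₁ hp₂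
    have hx₁ : x₁ ∉ T₁ := fun h' => Finset.disjoint_left.1 hp₁.2.1.2 h' hp₁.1
    have hx₂ : x₂ ∉ T₂ := fun h' => Finset.disjoint_left.1 hp₂.2.1.2 h' hp₂.1
    obtain rfl : x₁ = x₂ := (mem_insert.1 (h ▸ mem_insert_self x₁ T₁)).resolve_right
      fun h' => Finset.disjoint_left.1 hp₂.2.1.2 h' hp₁.1
    rw [← erase_insert hx₁, h, erase_insert hx₂]
  · intro T hT
    simp only [mem_filter, mem_cliqueFinsetOn] at hT
    obtain ⟨⟨hTV, hT⟩, hTW⟩ := hT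
    obtain ⟨x, hxT, hxW⟩ : ∃ x ∈ T, x ∈ W := by
      by_contra! h
      exact hTW fun y hy => mem_sdiff.2 ⟨hTV hy, h y hy⟩
    refine ⟨(x, T.erase x),
      mem_product.2 ⟨hxW, mem_cliqueFinsetOn.2 ⟨fun y hy => ?_, ?_⟩⟩, insert_erase hxT⟩
    · obtain ⟨hyx, hyT⟩ := mem_erase.1 hy
      exact mem_sdiff.2 ⟨hTV hyT, (hW x hxW y (hTV hyT)).1 (hT.isClique hxT hyT (Ne.symm hyx))⟩
    · exact hT.erase_of_mem hxT

lemma card_cliqueFinsetOn_comap_top {β : Type*} [DecidableEq β] (g : α → β) (J : Finset β)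
    {V : Finset α} (hV : ∀ x ∈ V, g x ∈ J) (s : ℕ) :
    #(((⊤ : SimpleGraph β).comap g).cliqueFinsetOn V s) =
      (J.val.map fun i => #{x ∈ V | g x = i}).esymm s := by
  induction J using Finset.induction_on generalizing V s with
  | empty =>
    obtain rfl : V = ∅ := eq_empty_of_forall_notMem fun x hx => by simpa using hV x hx
    rcases s with _ | s
    · simp
    · simp [cliqueFinsetOn_empty_succ, Multiset.esymm, Multiset.powersetCard_zero_right]
  | @insert i J hi ih =>
    rcases s with _ | s
    · simp
    set W := {x ∈ V | g x = i}
    have hVW : ∀ x ∈ V \ W, g x ∈ J := fun x hx => by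
      simp only [W, mem_sdiff, mem_filter, not_and] at hx
      exact (mem_insert.1 (hV x hx.1)).resolve_left (hx.2 hx.1)
    have hfibers : J.val.map (fun j => #{x ∈ V \ W | g x = j}) =
        J.val.map (fun j => #{x ∈ V | g x = j}) := by
      refine Multiset.map_congr rfl fun j hj => congrArg card ?_
      ext x
      simp only [W, mem_sdiff, mem_filter]
      exact ⟨fun h => ⟨h.1.1, h.2⟩,
        fun h => ⟨⟨h.1, fun h' => hi (by rw [← h'.2, h.2]; exact hj)⟩, h.2⟩⟩
    rw [card_cliqueFinsetOn_succ_of_join (filter_subset _ _ : W ⊆ V) ?_, ih hVW, ih hVW,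
      insert_val_of_notMem hi, Multiset.map_cons, Multiset.esymm_cons_succ, hfibers]
    intro x hx y hy
    simp only [mem_filter] at hx
    simp [hx.2, hy, eq_comm]
end SimpleGraph

lemma mem_hsupp {G : HG} {u : ℕ} : u ∈ hsupp G ↔ ∃ e ∈ G, u ∈ e := by
  simp [hsupp, mem_sup]

lemma hsupp_mono {G K : HG} (h : K ⊆ G) : hsupp K ⊆ hsupp G :=
  sup_mono h

lemma hsupp_powersetCard {r : ℕ} {T : Finset ℕ} (hr : r ≠ 0) (hrT : r ≤ #T) :
    hsupp (T.powersetCard r) = T := by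
  rw [hsupp, sup_eq_biUnion, powersetCard_biUnion hr hrT]

lemma emap_powersetCard {f : ℕ → ℕ} {S : Finset ℕ} (hf : Set.InjOn f S) (r : ℕ) :
    emap f (S.powersetCard r) = (S.image f).powersetCard r := by
  ext B
  simp only [emap, mem_image, mem_powersetCard]
  constructor
  · rintro ⟨A, ⟨hAS, rfl⟩, rfl⟩
    exact ⟨image_subset_image hAS, card_image_of_injOn (hf.mono hAS)⟩
  · rintro ⟨hBS, rfl⟩
    obtain ⟨A, hAS, rfl⟩ := subset_image_iff.1 hBS
    exact ⟨A, ⟨hAS, (card_image_of_injOn (hf.mono hAS)).symm⟩, rfl⟩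

lemma exists_injOn_range_image_eq {T : Finset ℕ} {s : ℕ} (hT : #T = s) :
    ∃ f : ℕ → ℕ, Set.InjOn f (range s) ∧ (range s).image f = T := by
  let f : ℕ → ℕ := fun x => if h : x < s then T.orderEmbOfFin hT ⟨x, h⟩ else 0
  have hf : Set.InjOn f (range s) := fun a ha b hb hab => by
    simp only [coe_range, Set.mem_Iio] at ha hb
    simpa [f, ha, hb] using hab
  refine ⟨f, hf, eq_of_subset_of_card_le (fun y hy => ?_) ?_⟩
  · obtain ⟨x, hx, rfl⟩ := mem_image.1 hy
    simp [f, mem_range.1 hx]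
  · rw [card_image_of_injOn hf, card_range, hT]

lemma isCopy_completeHG_iff {r s : ℕ} (hr : r ≠ 0) (hrs : r ≤ s) {K : HG} :
    IsCopy (completeHG r s) K ↔ ∃ T : Finset ℕ, #T = s ∧ T.powersetCard r = K := by
  have hsupp_eq : hsupp (completeHG r s) = range s :=
    hsupp_powersetCard hr (by rwa [card_range])
  rw [IsCopy, hsupp_eq]
  constructor
  · rintro ⟨f, hf, rfl⟩
    exact ⟨(range s).image f, by rw [card_image_of_injOn hf, card_range],
      (emap_powersetCard hf r).symm⟩
  · rintro ⟨T, hT, rfl⟩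
    obtain ⟨f, hf, himg⟩ := exists_injOn_range_image_eq hT
    exact ⟨f, hf, by rw [completeHG, emap_powersetCard hf, himg]⟩

lemma copyCount_completeHG {r s n : ℕ} (hr : r ≠ 0) (hrs : r ≤ s) {G : HG}
    (hG : hsupp G ⊆ range n) :
    copyCount (completeHG r s) G = #{T ∈ (range n).powersetCard s | T.powersetCard r ⊆ G} := by
  have hcopies : {K : HG | K ⊆ G ∧ IsCopy (completeHG r s) K} =
      ({T ∈ (range n).powersetCard s | T.powersetCard r ⊆ G}.image (·.powersetCard r) :
        Finset HG) := by
    ext K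
    simp only [Set.mem_ofPred_eq, isCopy_completeHG_iff hr hrs, coe_image, coe_filter,
      mem_powersetCard, Set.mem_image]
    constructor
    · rintro ⟨hKG, T, hT, rfl⟩
      refine ⟨T, ⟨⟨?_, hT⟩, hKG⟩, rfl⟩
      rw [← hsupp_powersetCard (T := T) hr (by omega)]
      exact (hsupp_mono hKG).trans hG
    · rintro ⟨T, ⟨⟨-, hT⟩, hTG⟩, rfl⟩
      exact ⟨hTG, T, hT, rfl⟩
  rw [copyCount, hcopies, Set.ncard_coe_finset]
  refine card_image_of_injOn fun T₁ h₁ T₂ h₂ h => powersetCard_injOn hr hrs ?_ ?_ h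
  · exact (mem_powersetCard.1 (mem_filter.1 h₁).1).2
  · exact (mem_powersetCard.1 (mem_filter.1 h₂).1).2

def shadowGraph (G : HG) : SimpleGraph ℕ where
  Adj u v := u ≠ v ∧ ∃ e ∈ G, u ∈ e ∧ v ∈ e
  symm := ⟨fun _ _ ⟨huv, e, he, hu, hv⟩ => ⟨huv.symm, e, he, hv, hu⟩⟩
  loopless := ⟨fun _ h => h.1 rfl⟩

@[simp] lemma shadowGraph_adj {G : HG} {u v : ℕ} :
    (shadowGraph G).Adj u v ↔ u ≠ v ∧ ∃ e ∈ G, u ∈ e ∧ v ∈ e :=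
  Iff.rfl

instance (G : HG) : DecidableRel (shadowGraph G).Adj :=
  fun u v => inferInstanceAs (Decidable (u ≠ v ∧ ∃ e ∈ G, u ∈ e ∧ v ∈ e))

lemma isClique_shadowGraph_of_powersetCard_subset {r : ℕ} {G : HG} {T : Finset ℕ}
    (hr : 2 ≤ r) (hrT : r ≤ #T) (hT : T.powersetCard r ⊆ G) : (shadowGraph G).IsClique T := by
  intro u hu v hv huv
  obtain ⟨e, hpe, heT, he⟩ := exists_subsuperset_card_eq (s := {u, v}) (n := r)
    (insert_subset hu (singleton_subset_iff.2 hv)) (by rwa [card_pair huv]) hrT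
  exact shadowGraph_adj.2 ⟨huv, e, hT (mem_powersetCard.2 ⟨heT, he⟩),
    hpe (mem_insert_self _ _), hpe (mem_insert_of_mem (mem_singleton_self _))⟩

lemma Contains.exists_isNClique_shadowGraph {r t : ℕ} {G F : HG} (hGF : Contains G F)
    (hF : memFamilyK r t F) : ∃ S, (shadowGraph G).IsNClique t S := by
  obtain ⟨K, hKG, f, hf, rfl⟩ := hGF
  obtain ⟨-, -, S, hS, hcover⟩ := hF
  have hfS : Set.InjOn f S := fun u hu v hv huv => by
    by_contra hne
    obtain ⟨e, he, hue, hve⟩ := hcover u hu v hv hne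
    exact hne (hf (mem_hsupp.2 ⟨e, he, hue⟩) (mem_hsupp.2 ⟨e, he, hve⟩) huv)
  refine ⟨S.image f, ⟨?_, by rw [card_image_of_injOn hfS, hS]⟩⟩
  simp only [coe_image]
  rintro _ ⟨u, hu, rfl⟩ _ ⟨v, hv, rfl⟩ hne
  have huv : u ≠ v := fun h => hne (h ▸ rfl)
  obtain ⟨e, he, hue, hve⟩ := hcover u hu v hv huv
  exact shadowGraph_adj.2 ⟨hne, e.image f, hKG (mem_image_of_mem _ he), mem_image_of_mem f hue,
    mem_image_of_mem f hve⟩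

lemma contains_of_isNClique_shadowGraph {r t : ℕ} {G : HG} (hG : Uniform r G) {S : Finset ℕ}
    (hS : (shadowGraph G).IsNClique t S) : ∃ F, memFamilyK r t F ∧ Contains G F := by
  have hpairs : ∀ p ∈ S.powersetCard 2, ∃ e ∈ G, p ⊆ e := fun p hp => by
    obtain ⟨hpS, hp⟩ := mem_powersetCard.1 hp
    obtain ⟨u, v, huv, rfl⟩ := card_eq_two.1 hp
    obtain ⟨-, e, he, hu, hv⟩ := shadowGraph_adj.1 <| hS.isClique (hpS (mem_insert_self _ _))
      (hpS (mem_insert_of_mem (mem_singleton_self _))) huv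
    exact ⟨e, he, insert_subset hu (singleton_subset_iff.2 hv)⟩
  choose! edge hedgeG hedge using hpairs
  have hFG : (S.powersetCard 2).image edge ⊆ G := image_subset_iff.2 hedgeG
  refine ⟨(S.powersetCard 2).image edge, ⟨fun e he => hG e (hFG he), ?_, S, hS.card_eq, ?_⟩,
    (S.powersetCard 2).image edge, hFG, id, Set.injOn_id _, ?_⟩
  · exact card_image_le.trans (by rw [card_powersetCard, hS.card_eq])
  · intro u hu v hv huv
    have hp : {u, v} ∈ S.powersetCard 2 :=
      mem_powersetCard.2 ⟨insert_subset hu (singleton_subset_iff.2 hv), card_pair huv⟩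
    exact ⟨edge {u, v}, mem_image_of_mem _ hp, hedge _ hp (mem_insert_self _ _),
      hedge _ hp (mem_insert_of_mem (mem_singleton_self _))⟩
  · change image (image id) _ = _
    rw [show image (id : ℕ → ℕ) = id from funext fun _ => image_id, image_id]

lemma cliqueFree_shadowGraph_iff {r t : ℕ} {G : HG} (hG : Uniform r G) :
    (shadowGraph G).CliqueFree t ↔ ∀ F, memFamilyK r t F → ¬ Contains G F := by
  constructor
  · intro hfree F hF hGF
    obtain ⟨S, hS⟩ := hGF.exists_isNClique_shadowGraph hF
    exact hfree S hS
  · intro hfree S hS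
    obtain ⟨F, hF, hGF⟩ := contains_of_isNClique_shadowGraph hG hS
    exact hfree F hF hGF

lemma uniform_turanHG (r n l : ℕ) : Uniform r (turanHG r n l) :=
  fun _ he => (mem_powersetCard.1 (mem_filter.1 he).1).2

lemma hsupp_turanHG_subset (r n l : ℕ) : hsupp (turanHG r n l) ⊆ range n := fun _ hx => by
  obtain ⟨e, he, hxe⟩ := mem_hsupp.1 hx
  exact (mem_powersetCard.1 (mem_filter.1 he).1).1 hxe

lemma shadowGraph_turanHG_le (r n l : ℕ) :
    shadowGraph (turanHG r n l) ≤ (⊤ : SimpleGraph ℕ).comap (· % l) := by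
  rintro u v ⟨huv, e, he, hu, hv⟩ hmod
  exact huv ((mem_filter.1 he).2 u hu v hv hmod)

lemma cliqueFree_comap_top_mod {l : ℕ} (hl : 0 < l) :
    ((⊤ : SimpleGraph ℕ).comap (· % l)).CliqueFree (l + 1) := by
  intro S hS
  have := card_le_card_of_injOn (· % l) (t := range l)
    (fun x _ => mem_range.2 (Nat.mod_lt x hl))
    (fun x hx y hy hxy => by_contra fun hne => hS.isClique hx hy hne hxy)
  rw [hS.card_eq, card_range] at this
  omega

lemma filter_powersetCard_subset_turanHG_eq {r s n l : ℕ} (hr : 2 ≤ r) (hrs : r ≤ s) :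
    {T ∈ (range n).powersetCard s | T.powersetCard r ⊆ turanHG r n l} =
      ((⊤ : SimpleGraph ℕ).comap (· % l)).cliqueFinsetOn (range n) s := by
  ext T
  simp only [mem_filter, mem_powersetCard, SimpleGraph.mem_cliqueFinsetOn,
    SimpleGraph.isNClique_iff]
  constructor
  · rintro ⟨⟨hTn, hT⟩, hTG⟩
    exact ⟨hTn, (isClique_shadowGraph_of_powersetCard_subset hr (hT ▸ hrs) hTG).mono
      (shadowGraph_turanHG_le r n l), hT⟩
  · rintro ⟨hTn, hTc, hT⟩
    refine ⟨⟨hTn, hT⟩, fun e he => ?_⟩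
    obtain ⟨heT, he⟩ := mem_powersetCard.1 he
    refine mem_filter.2 ⟨mem_powersetCard.2 ⟨heT.trans hTn, he⟩, fun i hi j hj hij => ?_⟩
    by_contra hne
    exact hTc (heT hi) (heT hj) hne hij

lemma map_card_filter_mod_eq_balancedParts (n : ℕ) {l : ℕ} (hl : 0 < l) :
    (range l).val.map (fun i => #{x ∈ range n | x % l = i}) = Multiset.balancedParts n l := by
  have hfiber : ∀ i < l, #{x ∈ range n | x % l = i} = n / l + if i < n % l then 1 else 0 :=
    fun i hi => by
      have := Nat.count_modEq_card n hl i
      rw [Nat.count_eq_card_filter_range, Nat.mod_eq_of_lt hi] at this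
      simpa [Nat.ModEq, Nat.mod_eq_of_lt hi] using this
  have hbal : Multiset.IsBalanced ((range l).val.map fun i => #{x ∈ range n | x % l = i}) := by
    simp only [Multiset.IsBalanced, Multiset.mem_map, mem_val, mem_range]
    rintro _ ⟨i, hi, rfl⟩ _ ⟨j, hj, rfl⟩
    rw [hfiber i hi, hfiber j hj]
    split_ifs <;> omega
  rw [hbal.eq_balancedParts, Finset.sum_map_val, ← card_eq_sum_card_fiberwise
    (fun x _ => mem_range.2 (Nat.mod_lt x hl)), card_range, Multiset.card_map, card_val,
    card_range]

lemma copyCount_completeHG_turanHG {r s n l : ℕ} (hr : 2 ≤ r) (hrs : r ≤ s) (hl : 0 < l) :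
    copyCount (completeHG r s) (turanHG r n l) = (Multiset.balancedParts n l).esymm s := by
  rw [copyCount_completeHG (by omega) hrs (hsupp_turanHG_subset r n l),
    filter_powersetCard_subset_turanHG_eq hr hrs,
    SimpleGraph.card_cliqueFinsetOn_comap_top _ (range l)
      (fun x _ => mem_range.2 (Nat.mod_lt x hl)),
    map_card_filter_mod_eq_balancedParts n hl]

lemma copyCount_completeHG_le {r s n l : ℕ} (hr : 2 ≤ r) (hrs : r ≤ s) {G : HG}
    (hG : hsupp G ⊆ range n) (hfree : (shadowGraph G).CliqueFree (l + 1)) :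
    copyCount (completeHG r s) G ≤ (Multiset.balancedParts n l).esymm s := by
  rw [copyCount_completeHG (by omega) hrs hG]
  calc #{T ∈ (range n).powersetCard s | T.powersetCard r ⊆ G}
      ≤ #((shadowGraph G).cliqueFinsetOn (range n) s) := by
        refine card_le_card fun T hT => ?_
        obtain ⟨hT, hTG⟩ := mem_filter.1 hT
        obtain ⟨hTn, hT⟩ := mem_powersetCard.1 hT
        exact SimpleGraph.mem_cliqueFinsetOn.2 ⟨hTn,
          isClique_shadowGraph_of_powersetCard_subset hr (hT ▸ hrs) hTG, hT⟩
    _ ≤ (Multiset.balancedParts #(range n) l).esymm s :=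
        SimpleGraph.card_cliqueFinsetOn_le_esymm_balancedParts hfree.cliqueFreeOn s
    _ = (Multiset.balancedParts n l).esymm s := by rw [card_range]

/-- For `l ≥ s ≥ r ≥ 3` and sufficiently large `n`, the maximum number of
copies of `K_s^{(r)}` in an `n`-vertex `r`-graph containing no member of the family
`𝒦_{l+1}^r` equals `N(K_s^{(r)}, T_r(n, l))`. -/
theorem stmt3 (r s l : ℕ) (hr : 3 ≤ r) (hrs : r ≤ s) (hsl : s ≤ l) :
    ∃ N : ℕ, ∀ n : ℕ, N ≤ n →
      exCountFam r n (completeHG r s) (memFamilyK r (l+1)) =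
        copyCount (completeHG r s) (turanHG r n l) := by
  refine ⟨0, fun n _ => ?_⟩
  have hl : 0 < l := by omega
  refine IsGreatest.csSup_eq ⟨⟨turanHG r n l, uniform_turanHG r n l, hsupp_turanHG_subset r n l,
    (cliqueFree_shadowGraph_iff (uniform_turanHG r n l)).1
      ((cliqueFree_comap_top_mod hl).anti (shadowGraph_turanHG_le r n l)), rfl⟩, ?_⟩
  rintro _ ⟨G, hU, hG, hfree, rfl⟩
  rw [copyCount_completeHG_turanHG (by omega) hrs hl]
  exact copyCount_completeHG_le (by omega) hrs hG ((cliqueFree_shadowGraph_iff hU).2 hfree)
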